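/- arXiv:2005.02196 — 5 statements merged into one kernel-verified Lean document; each statement's English description precedes it below -/
import Mathlib

section
/- For positive definite n×n matrices σ and ρ, the LogDet divergence D_ℓD(σ‖ρ) = tr(ρ⁻¹σ) − log det(ρ⁻¹σ) − n is nonnegative, and it is zero if and only if σ = ρ. -/
open Matrix

/-!
Writing `σ = Bᴴ B`, the matrix `S = B ρ⁻¹ Bᴴ` is positive definite and has the same trace and
determinant as `ρ⁻¹ σ`, so the divergence equals `∑ᵢ (λᵢ - log λᵢ - 1)` over the eigenvalues `λᵢ`
of `S`. Each term is nonnegative since `log x ≤ x - 1`, with equality only at `x = 1`; hence the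
divergence vanishes iff `S = 1`, i.e. iff `σ = ρ`.
-/

namespace Matrix

variable {ι : Type*} [Fintype ι] [DecidableEq ι]

noncomputable def logDetDivergence (σ ρ : Matrix ι ι ℝ) : ℝ :=
  (ρ⁻¹ * σ).trace - Real.log (ρ⁻¹ * σ).det - Fintype.card ι

lemma IsHermitian.eq_one_of_eigenvalues_eq_one {𝕜 : Type*} [RCLike 𝕜] {A : Matrix ι ι 𝕜}
    (hA : A.IsHermitian) (h : ∀ i, hA.eigenvalues i = 1) : A = 1 := by
  refine CFC.eq_one_of_spectrum_subset_one (R := ℝ) A ?_ hA.isSelfAdjoint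
  rw [hA.spectrum_real_eq_range_eigenvalues]
  rintro _ ⟨i, rfl⟩
  exact h i

lemma mul_nonsing_inv_mul_eq_one_iff {α : Type*} [CommRing α] {B C ρ : Matrix ι ι α}
    (hρ : IsUnit ρ.det) : B * ρ⁻¹ * C = 1 ↔ C * B = ρ := by
  rw [mul_assoc, mul_eq_one_comm, mul_assoc]
  constructor
  · intro h
    rw [← mul_nonsing_inv_cancel_left ρ (C * B) hρ, h, mul_one]
  · rintro rfl
    exact nonsing_inv_mul _ hρ

lemma logDetDivergence_one_right (S : Matrix ι ι ℝ) :
    logDetDivergence S 1 = S.trace - Real.log S.det - Fintype.card ι := by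
  simp [logDetDivergence]

lemma logDetDivergence_conjTranspose_mul_self (B ρ : Matrix ι ι ℝ) :
    logDetDivergence (Bᴴ * B) ρ = logDetDivergence (B * ρ⁻¹ * Bᴴ) 1 := by
  rw [logDetDivergence_one_right, logDetDivergence, ← mul_assoc, trace_mul_comm, ← mul_assoc]
  congr 3
  simp only [det_mul]
  ring

namespace PosDef

section

variable {S : Matrix ι ι ℝ} (hS : S.PosDef)
include hS

lemma logDetDivergence_one_right_eq_sum :
    logDetDivergence S 1 = ∑ i, (hS.1.eigenvalues i - Real.log (hS.1.eigenvalues i) - 1) := by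
  have hlog : Real.log S.det = ∑ i, Real.log (hS.1.eigenvalues i) := by
    rw [hS.1.det_eq_prod_eigenvalues]
    exact Real.log_prod fun i _ ↦ (hS.eigenvalues_pos i).ne'
  simp [logDetDivergence_one_right, hS.1.trace_eq_sum_eigenvalues, hlog, Finset.sum_sub_distrib]

lemma sub_log_eigenvalues_sub_one_nonneg (i : ι) :
    0 ≤ hS.1.eigenvalues i - Real.log (hS.1.eigenvalues i) - 1 := by
  linarith [Real.log_le_sub_one_of_pos (hS.eigenvalues_pos i)]

lemma logDetDivergence_one_right_nonneg : 0 ≤ logDetDivergence S 1 := by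
  rw [hS.logDetDivergence_one_right_eq_sum]
  exact Finset.sum_nonneg fun i _ ↦ hS.sub_log_eigenvalues_sub_one_nonneg i

lemma logDetDivergence_one_right_eq_zero_iff : logDetDivergence S 1 = 0 ↔ S = 1 := by
  refine ⟨fun h ↦ hS.1.eq_one_of_eigenvalues_eq_one fun i ↦ ?_, fun h ↦ by
    simp [h, logDetDivergence_one_right]⟩
  rw [hS.logDetDivergence_one_right_eq_sum,
    Finset.sum_eq_zero_iff_of_nonneg fun i _ ↦ hS.sub_log_eigenvalues_sub_one_nonneg i] at h
  by_contra hne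
  linarith [Real.log_lt_sub_one_of_pos (hS.eigenvalues_pos i) hne, h i (Finset.mem_univ i)]

lemma exists_isUnit_eq_conjTranspose_mul_self : ∃ B : Matrix ι ι ℝ, IsUnit B ∧ S = Bᴴ * B := by
  open scoped MatrixOrder in
  obtain ⟨B, hB⟩ := CStarAlgebra.nonneg_iff_eq_star_mul_self.mp hS.posSemidef.nonneg
  rw [star_eq_conjTranspose] at hB
  exact ⟨B, isUnit_of_mul_isUnit_right (hB ▸ hS.isUnit), hB⟩

end

section

variable {σ ρ : Matrix ι ι ℝ} (hσ : σ.PosDef) (hρ : ρ.PosDef)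
include hσ hρ

lemma logDetDivergence_nonneg : 0 ≤ logDetDivergence σ ρ := by
  obtain ⟨B, hB, rfl⟩ := hσ.exists_isUnit_eq_conjTranspose_mul_self
  rw [logDetDivergence_conjTranspose_mul_self]
  exact (hρ.inv.mul_mul_conjTranspose_same (vecMul_injective_iff_isUnit.mpr hB))
    |>.logDetDivergence_one_right_nonneg

lemma logDetDivergence_eq_zero_iff : logDetDivergence σ ρ = 0 ↔ σ = ρ := by
  obtain ⟨B, hB, rfl⟩ := hσ.exists_isUnit_eq_conjTranspose_mul_self
  rw [logDetDivergence_conjTranspose_mul_self,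
    (hρ.inv.mul_mul_conjTranspose_same (vecMul_injective_iff_isUnit.mpr hB))
      |>.logDetDivergence_one_right_eq_zero_iff,
    mul_nonsing_inv_mul_eq_one_iff hρ.det_pos.ne'.isUnit]

end

end PosDef

end Matrix

/-- For positive definite `n×n` matrices `σ` and `ρ`, the LogDet divergence
`D_ℓD(σ‖ρ) = tr(ρ⁻¹σ) − log det(ρ⁻¹σ) − n` is nonnegative, with equality iff `σ = ρ`. -/
theorem logDet_divergence_nonneg_eq_zero_iff {n : ℕ}
    (σ ρ : Matrix (Fin n) (Fin n) ℝ) (hσ : σ.PosDef) (hρ : ρ.PosDef) :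
    0 ≤ Matrix.trace (ρ⁻¹ * σ) - Real.log (Matrix.det (ρ⁻¹ * σ)) - n ∧
    (Matrix.trace (ρ⁻¹ * σ) - Real.log (Matrix.det (ρ⁻¹ * σ)) - n = 0 ↔ σ = ρ) := by
  have hD : Matrix.trace (ρ⁻¹ * σ) - Real.log (Matrix.det (ρ⁻¹ * σ)) - n =
      logDetDivergence σ ρ := by
    simp [logDetDivergence]
  rw [hD]
  exact ⟨hσ.logDetDivergence_nonneg hρ, hσ.logDetDivergence_eq_zero_iff hρ⟩
end

section
/- For positive definite matrices X = VΛVᵀ and Y = UΘUᵀ and a separable spectral function φ (i.e., φ(X) = Σᵢ φ(λᵢ(X)) for a scalar strictly convex differentiable function φ), the Bregman matrix divergence decomposes as D_φ(X‖Y) = Σᵢⱼ (vᵢᵀuⱼ)² [φ(λᵢ) − φ(θⱼ) − φ′(θⱼ)(λᵢ − θⱼ)] = Σᵢⱼ (vᵢᵀuⱼ)² D_φ(λᵢ, θⱼ). -/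
open Matrix

private theorem trace_conj_aux {n : ℕ} (A B : Matrix (Fin n) (Fin n) ℝ) (d l : Fin n → ℝ) :
    Matrix.trace (A * Matrix.diagonal d * Aᵀ * (B * Matrix.diagonal l * Bᵀ)) =
      ∑ j, ∑ i, ((Bᵀ * A) i j)^2 * (d j * l i) := by
  have h1 : A * Matrix.diagonal d * Aᵀ * (B * Matrix.diagonal l * Bᵀ)
      = A * (Matrix.diagonal d * (Aᵀ * B * Matrix.diagonal l * Bᵀ)) := by
    simp only [Matrix.mul_assoc]
  rw [h1, Matrix.trace_mul_comm]
  have h2 : Matrix.diagonal d * (Aᵀ * B * Matrix.diagonal l * Bᵀ) * A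
      = Matrix.diagonal d * (Aᵀ * B * Matrix.diagonal l * (Bᵀ * A)) := by
    simp only [Matrix.mul_assoc]
  rw [h2]
  simp only [Matrix.trace, Matrix.diag_apply, Matrix.diagonal_mul]
  refine Finset.sum_congr rfl fun j _ => ?_
  have h3 : (Aᵀ * B * Matrix.diagonal l * (Bᵀ * A)) j j
      = ∑ i, (Bᵀ * A) i j * l i * (Bᵀ * A) i j := by
    rw [Matrix.mul_apply]
    refine Finset.sum_congr rfl fun i _ => ?_
    rw [Matrix.mul_diagonal]
    congr 1
    simp [Matrix.mul_apply, Matrix.transpose_apply, mul_comm]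
  rw [h3, Finset.mul_sum]
  refine Finset.sum_congr rfl fun i _ => ?_
  ring

/-- For positive definite `X = VΛVᵀ` and `Y = UΘUᵀ` and a separable spectral
function built from a strictly convex differentiable scalar `φ` (with derivative `φ'`), the
Bregman matrix divergence `D_φ(X‖Y) = φ(X) − φ(Y) − tr(∇φ(Y)(X − Y))`, where
`φ(X) = Σᵢ φ(λᵢ)` and `∇φ(Y) = U diag(φ'(θⱼ)) Uᵀ`, decomposes as
`Σᵢⱼ (vᵢᵀuⱼ)² [φ(λᵢ) − φ(θⱼ) − φ'(θⱼ)(λᵢ − θⱼ)] = Σᵢⱼ (vᵢᵀuⱼ)² D_φ(λᵢ, θⱼ)`. -/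
theorem bregman_separable_spectral_decomposition {n : ℕ}
    (X Y V U : Matrix (Fin n) (Fin n) ℝ) (lam th : Fin n → ℝ)
    (φ φ' : ℝ → ℝ)
    (hX : X.PosDef) (hY : Y.PosDef)
    (hV : Vᵀ * V = 1) (hU : Uᵀ * U = 1)
    (hlam : ∀ i, 0 < lam i) (hth : ∀ i, 0 < th i)
    (hXdec : X = V * Matrix.diagonal lam * Vᵀ)
    (hYdec : Y = U * Matrix.diagonal th * Uᵀ)
    (hconv : StrictConvexOn ℝ (Set.Ioi (0 : ℝ)) φ)
    (hderiv : ∀ t > (0 : ℝ), HasDerivAt φ (φ' t) t) :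
    (∑ i, φ (lam i)) - (∑ j, φ (th j))
        - Matrix.trace ((U * Matrix.diagonal (fun j => φ' (th j)) * Uᵀ) * (X - Y)) =
      ∑ i, ∑ j, (∑ k, V k i * U k j) ^ 2 *
        (φ (lam i) - φ (th j) - φ' (th j) * (lam i - th j)) := by
  have hUU : U * Uᵀ = 1 := mul_eq_one_comm.mp hU
  have hVV : V * Vᵀ = 1 := mul_eq_one_comm.mp hV
  set W : Matrix (Fin n) (Fin n) ℝ := Vᵀ * U with hWdef
  set c : Fin n → Fin n → ℝ := fun i j => (W i j) ^ 2 with hc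
  have hcij : ∀ i j, (∑ k, V k i * U k j) ^ 2 = c i j := by
    intro i j
    simp [hc, hWdef, Matrix.mul_apply, Matrix.transpose_apply]
  -- row sums
  have hWWT : W * Wᵀ = 1 := by
    rw [hWdef, Matrix.transpose_mul, Matrix.transpose_transpose]
    calc Vᵀ * U * (Uᵀ * V) = Vᵀ * (U * Uᵀ) * V := by simp only [Matrix.mul_assoc]
    _ = 1 := by rw [hUU, Matrix.mul_one, hV]
  have hWTW : Wᵀ * W = 1 := mul_eq_one_comm.mp hWWT
  have hrow : ∀ i, ∑ j, c i j = 1 := by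
    intro i
    have := congrArg (fun M => M i i) hWWT
    simpa [Matrix.mul_apply, Matrix.transpose_apply, Matrix.one_apply, hc, pow_two] using this
  have hcol : ∀ j, ∑ i, c i j = 1 := by
    intro j
    have := congrArg (fun M => M j j) hWTW
    simpa [Matrix.mul_apply, Matrix.transpose_apply, Matrix.one_apply, hc, pow_two] using this
  -- trace computations
  have htr1 : Matrix.trace ((U * Matrix.diagonal (fun j => φ' (th j)) * Uᵀ)
        * (V * Matrix.diagonal lam * Vᵀ))
      = ∑ j, ∑ i, c i j * (φ' (th j) * lam i) := by
    rw [trace_conj_aux]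
  have htr2 : Matrix.trace ((U * Matrix.diagonal (fun j => φ' (th j)) * Uᵀ)
        * (U * Matrix.diagonal th * Uᵀ))
      = ∑ j, φ' (th j) * th j := by
    rw [trace_conj_aux, hU]
    refine Finset.sum_congr rfl fun j _ => ?_
    simp [Matrix.one_apply, Finset.sum_ite_eq]
  rw [hXdec, hYdec, Matrix.mul_sub, Matrix.trace_sub, htr1, htr2]
  simp only [hcij]
  have hrhs : ∑ i, ∑ j, c i j * (φ (lam i) - φ (th j) - φ' (th j) * (lam i - th j))
      = (∑ i, φ (lam i)) - (∑ j, φ (th j))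
        - ((∑ j, ∑ i, c i j * (φ' (th j) * lam i)) - ∑ j, φ' (th j) * th j) := by
    have e1 : ∑ i, ∑ j, c i j * φ (lam i) = ∑ i, φ (lam i) := by
      refine Finset.sum_congr rfl fun i _ => ?_
      rw [← Finset.sum_mul, hrow, one_mul]
    have e2 : ∑ i, ∑ j, c i j * φ (th j) = ∑ j, φ (th j) := by
      rw [Finset.sum_comm]
      refine Finset.sum_congr rfl fun j _ => ?_
      rw [← Finset.sum_mul, hcol, one_mul]
    have e3 : ∑ i, ∑ j, c i j * (φ' (th j) * lam i) = ∑ j, ∑ i, c i j * (φ' (th j) * lam i) :=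
      Finset.sum_comm
    have e4 : ∑ i, ∑ j, c i j * (φ' (th j) * th j) = ∑ j, φ' (th j) * th j := by
      rw [Finset.sum_comm]
      refine Finset.sum_congr rfl fun j _ => ?_
      rw [← Finset.sum_mul, hcol, one_mul]
    calc ∑ i, ∑ j, c i j * (φ (lam i) - φ (th j) - φ' (th j) * (lam i - th j))
        = ∑ i, ∑ j, (c i j * φ (lam i) - c i j * φ (th j)
            - (c i j * (φ' (th j) * lam i) - c i j * (φ' (th j) * th j))) := by
          refine Finset.sum_congr rfl fun i _ => Finset.sum_congr rfl fun j _ => ?_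
          ring
      _ = (∑ i, ∑ j, c i j * φ (lam i)) - (∑ i, ∑ j, c i j * φ (th j))
            - ((∑ i, ∑ j, c i j * (φ' (th j) * lam i))
              - ∑ i, ∑ j, c i j * (φ' (th j) * th j)) := by
          simp [Finset.sum_sub_distrib]
      _ = _ := by rw [e1, e2, e3, e4]
  rw [hrhs]
end

section
/- Let M be an m×n real matrix of full column rank (m ≥ n) and X, Y positive definite n×n matrices. Then the range-restricted LogDet divergence satisfies D_ℓD(MXMᵀ ‖ MYMᵀ) = D_ℓD(X ‖ Y), where the divergence of the rank-n matrices MXMᵀ and MYMᵀ is computed on their common n-dimensional range. -/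
open Matrix

/-- The LogDet divergence on positive definite matrices indexed by `Fin n`. -/
noncomputable def logDetDiv {n : ℕ} (A B : Matrix (Fin n) (Fin n) ℝ) : ℝ :=
  Matrix.trace (B⁻¹ * A) + Real.log (Matrix.det B / Matrix.det A) - n

/-- Congruence invariance of the LogDet divergence under an invertible matrix. -/
lemma logDetDiv_congruence {n : ℕ} (A X Y : Matrix (Fin n) (Fin n) ℝ)
    (hA : IsUnit A.det) (hY : IsUnit Y.det) :
    logDetDiv (A * X * Aᵀ) (A * Y * Aᵀ) = logDetDiv X Y := by
  have hAT : IsUnit Aᵀ.det := by rwa [Matrix.det_transpose]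
  have h1 : (A * Y * Aᵀ)⁻¹ = Aᵀ⁻¹ * Y⁻¹ * A⁻¹ := by
    rw [Matrix.mul_inv_rev, Matrix.mul_inv_rev, Matrix.mul_assoc]
  have htr : Matrix.trace ((A * Y * Aᵀ)⁻¹ * (A * X * Aᵀ)) = Matrix.trace (Y⁻¹ * X) := by
    rw [h1]
    have : Aᵀ⁻¹ * Y⁻¹ * A⁻¹ * (A * X * Aᵀ) = Aᵀ⁻¹ * (Y⁻¹ * X * Aᵀ) := by
      calc Aᵀ⁻¹ * Y⁻¹ * A⁻¹ * (A * X * Aᵀ)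
          = Aᵀ⁻¹ * (Y⁻¹ * ((A⁻¹ * A) * (X * Aᵀ))) := by
            simp only [Matrix.mul_assoc]
        _ = Aᵀ⁻¹ * (Y⁻¹ * X * Aᵀ) := by
            rw [Matrix.nonsing_inv_mul A hA, Matrix.one_mul, Matrix.mul_assoc]
    rw [this, Matrix.trace_mul_comm, Matrix.mul_assoc, Matrix.mul_assoc,
      Matrix.mul_nonsing_inv Aᵀ hAT, Matrix.mul_one]
  have hdet : (A * Y * Aᵀ).det / (A * X * Aᵀ).det = Y.det / X.det := by
    rw [Matrix.det_mul, Matrix.det_mul, Matrix.det_mul, Matrix.det_mul, Matrix.det_transpose]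
    have hA0 : A.det ≠ 0 := hA.ne_zero
    rcases eq_or_ne X.det 0 with h0 | h0
    · simp [h0]
    · field_simp
  simp only [logDetDiv, htr, hdet]

/-- For an `m×n` matrix `M` of full column rank (`m ≥ n`) and positive
definite `n×n` matrices `X, Y`, the range-restricted LogDet divergence satisfies
`D_ℓD(MXMᵀ‖MYMᵀ) = D_ℓD(X‖Y)`, where the divergence of the rank-`n` matrices `MXMᵀ` and
`MYMᵀ` is computed by compressing onto any orthonormal basis `Q` of their common range
(which equals the range of `M`). -/
theorem rangeRestricted_logDetDiv_full_column_rank {m n : ℕ} (hmn : n ≤ m)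
    (M : Matrix (Fin m) (Fin n) ℝ) (hrank : M.rank = n)
    (X Y : Matrix (Fin n) (Fin n) ℝ) (hX : X.PosDef) (hY : Y.PosDef)
    (Q : Matrix (Fin m) (Fin n) ℝ) (hQ : Qᵀ * Q = 1)
    (hrange : LinearMap.range Q.mulVecLin = LinearMap.range M.mulVecLin) :
    logDetDiv (Qᵀ * (M * X * Mᵀ) * Q) (Qᵀ * (M * Y * Mᵀ) * Q) = logDetDiv X Y := by
  -- M = Q * (Qᵀ * M)
  have hM : Q * (Qᵀ * M) = M := by
    have hmv : ∀ v : Fin n → ℝ, (Q * (Qᵀ * M)) *ᵥ v = M *ᵥ v := by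
      intro v
      have hmem : M *ᵥ v ∈ LinearMap.range Q.mulVecLin := by
        rw [hrange]; exact ⟨v, rfl⟩
      obtain ⟨w, hw⟩ := hmem
      simp only [Matrix.mulVecLin_apply] at hw
      calc (Q * (Qᵀ * M)) *ᵥ v = Q *ᵥ (Qᵀ *ᵥ (M *ᵥ v)) := by
            simp only [← Matrix.mulVec_mulVec]
        _ = Q *ᵥ (Qᵀ *ᵥ (Q *ᵥ w)) := by rw [hw]
        _ = Q *ᵥ ((Qᵀ * Q) *ᵥ w) := by rw [Matrix.mulVec_mulVec w Qᵀ Q]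
        _ = Q *ᵥ w := by rw [hQ, Matrix.one_mulVec]
        _ = M *ᵥ v := hw
    ext i j
    have := congrFun (hmv (Pi.single j 1)) i
    simpa [Matrix.mulVec_single] using this
  set A := Qᵀ * M with hAdef
  -- A has full rank, hence is invertible
  have hrankA : A.rank = n := by
    refine le_antisymm (A.rank_le_width) ?_
    calc n = M.rank := hrank.symm
      _ = (Q * A).rank := by rw [hM]
      _ ≤ A.rank := Matrix.rank_mul_le_right Q A
  have hAunit : IsUnit A.det := by
    have hrange' : LinearMap.range A.mulVecLin = ⊤ := by
      apply Submodule.eq_top_of_finrank_eq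
      rw [← Matrix.rank, hrankA]
      simp [Module.finrank_fin_fun]
    have hsurj : Function.Surjective A.mulVecLin := LinearMap.range_eq_top.mp hrange'
    have hinj : Function.Injective A.mulVecLin :=
      (LinearMap.injective_iff_surjective).mpr hsurj
    rw [← Matrix.isUnit_iff_isUnit_det, ← Matrix.mulVec_injective_iff_isUnit]
    rwa [← Matrix.coe_mulVecLin]
  have hYdet : IsUnit Y.det := by
    have := hY.det_pos
    exact isUnit_iff_ne_zero.mpr (ne_of_gt this)
  have h1 : Qᵀ * (M * X * Mᵀ) * Q = A * X * Aᵀ := by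
    rw [hAdef, Matrix.transpose_mul, Matrix.transpose_transpose]
    simp only [Matrix.mul_assoc]
  have h2 : Qᵀ * (M * Y * Mᵀ) * Q = A * Y * Aᵀ := by
    rw [hAdef, Matrix.transpose_mul, Matrix.transpose_transpose]
    simp only [Matrix.mul_assoc]
  rw [h1, h2]
  exact logDetDiv_congruence A X Y hAunit hYdet
end

section
/- The sample centered correntropy matrix is positive semidefinite: given N observations of n real-valued variables {xᵢ(k)}, i=1..n, k=1..N, and a positive definite kernel κ, the matrix Ĉ with Ĉ(i,j) = (1/N)Σₖ κ(xᵢ(k), xⱼ(k)) − (1/N²)Σₖ Σₗ κ(xᵢ(k), xⱼ(l)) is symmetric positive semidefinite. -/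
private lemma sum_comm3' {M : Type*} [AddCommMonoid M] {a b c : ℕ}
    (f : Fin a → Fin b → Fin c → M) :
    ∑ i, ∑ j, ∑ k, f i j k = ∑ k, ∑ i, ∑ j, f i j k := by
  calc ∑ i, ∑ j, ∑ k, f i j k
      = ∑ i, ∑ k, ∑ j, f i j k :=
        Finset.sum_congr rfl fun i _ => Finset.sum_comm
    _ = ∑ k, ∑ i, ∑ j, f i j k := Finset.sum_comm

private lemma sum_comm4' {M : Type*} [AddCommMonoid M] {a b c d : ℕ}
    (f : Fin a → Fin b → Fin c → Fin d → M) :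
    ∑ i, ∑ j, ∑ k, ∑ l, f i j k l = ∑ k, ∑ l, ∑ i, ∑ j, f i j k l := by
  calc ∑ i, ∑ j, ∑ k, ∑ l, f i j k l
      = ∑ k, ∑ i, ∑ j, ∑ l, f i j k l := sum_comm3' (fun i j k => ∑ l, f i j k l)
    _ = ∑ k, ∑ l, ∑ i, ∑ j, f i j k l :=
        Finset.sum_congr rfl fun k _ => sum_comm3' (fun i j l => f i j k l)

/-- The sample centered correntropy matrix is positive semidefinite: given
`N` observations of `n` real variables `x i k` and a symmetric positive definite kernel `κ`,
the matrix `Ĉ(i,j) = (1/N)Σₖ κ(xᵢ(k),xⱼ(k)) − (1/N²)ΣₖΣₗ κ(xᵢ(k),xⱼ(l))` is symmetric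
positive semidefinite. -/
theorem sample_centered_correntropy_matrix_posSemidef
    (κ : ℝ → ℝ → ℝ)
    (hκsymm : ∀ s t, κ s t = κ t s)
    (hκpd : ∀ (m : ℕ) (t c : Fin m → ℝ), 0 ≤ ∑ a, ∑ b, c a * c b * κ (t a) (t b))
    (n N : ℕ) (hN : 0 < N) (x : Fin n → Fin N → ℝ)
    (C : Fin n → Fin n → ℝ)
    (hC : ∀ i j, C i j =
      (1 / (N : ℝ)) * ∑ k, κ (x i k) (x j k)
        - (1 / (N : ℝ) ^ 2) * ∑ k, ∑ l, κ (x i k) (x j l)) :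
    (∀ i j, C i j = C j i) ∧
    ∀ α : Fin n → ℝ, 0 ≤ ∑ i, ∑ j, α i * α j * C i j := by
  have hNne : (N : ℝ) ≠ 0 := Nat.cast_ne_zero.mpr hN.ne'
  constructor
  · intro i j
    rw [hC, hC]
    congr 1
    · congr 1
      exact Finset.sum_congr rfl fun k _ => hκsymm _ _
    · congr 1
      rw [Finset.sum_comm]
      exact Finset.sum_congr rfl fun k _ => Finset.sum_congr rfl fun l _ => hκsymm _ _
  · intro α
    set Q : Fin N → Fin N → ℝ := fun k l => ∑ i, ∑ j, α i * α j * κ (x i k) (x j l) with hQ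
    have key : ∀ k l : Fin N, 0 ≤ Q k k + Q l l - Q k l - Q l k := by
      intro k l
      have h := hκpd (n + n) (Fin.addCases (fun i => x i k) (fun i => x i l))
        (Fin.addCases α (fun i => -(α i)))
      simp only [Fin.sum_univ_add, Fin.addCases_left, Fin.addCases_right,
        neg_mul, mul_neg, neg_neg, Finset.sum_neg_distrib, Finset.sum_add_distrib] at h
      simp only [hQ]
      linarith
    have hA : ∑ i, ∑ j, α i * α j * ((1 / (N : ℝ)) * ∑ k, κ (x i k) (x j k))
        = (1 / (N : ℝ)) * ∑ k, Q k k := by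
      calc ∑ i, ∑ j, α i * α j * ((1 / (N : ℝ)) * ∑ k, κ (x i k) (x j k))
          = ∑ i, ∑ j, ∑ k, (1 / (N : ℝ)) * (α i * α j * κ (x i k) (x j k)) := by
            refine Finset.sum_congr rfl fun i _ => Finset.sum_congr rfl fun j _ => ?_
            rw [Finset.mul_sum, Finset.mul_sum]
            exact Finset.sum_congr rfl fun k _ => by ring
        _ = ∑ k, ∑ i, ∑ j, (1 / (N : ℝ)) * (α i * α j * κ (x i k) (x j k)) :=
            sum_comm3' _
        _ = (1 / (N : ℝ)) * ∑ k, Q k k := by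
            rw [Finset.mul_sum]
            refine Finset.sum_congr rfl fun k _ => ?_
            simp only [hQ, Finset.mul_sum]
    have hB : ∑ i, ∑ j, α i * α j * ((1 / (N : ℝ) ^ 2) * ∑ k, ∑ l, κ (x i k) (x j l))
        = (1 / (N : ℝ) ^ 2) * ∑ k, ∑ l, Q k l := by
      calc ∑ i, ∑ j, α i * α j * ((1 / (N : ℝ) ^ 2) * ∑ k, ∑ l, κ (x i k) (x j l))
          = ∑ i, ∑ j, ∑ k, ∑ l, (1 / (N : ℝ) ^ 2) * (α i * α j * κ (x i k) (x j l)) := by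
            refine Finset.sum_congr rfl fun i _ => Finset.sum_congr rfl fun j _ => ?_
            rw [Finset.mul_sum, Finset.mul_sum]
            refine Finset.sum_congr rfl fun k _ => ?_
            rw [Finset.mul_sum, Finset.mul_sum]
            exact Finset.sum_congr rfl fun l _ => by ring
        _ = ∑ k, ∑ l, ∑ i, ∑ j, (1 / (N : ℝ) ^ 2) * (α i * α j * κ (x i k) (x j l)) :=
            sum_comm4' _
        _ = (1 / (N : ℝ) ^ 2) * ∑ k, ∑ l, Q k l := by
            rw [Finset.mul_sum]
            refine Finset.sum_congr rfl fun k _ => ?_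
            rw [Finset.mul_sum]
            refine Finset.sum_congr rfl fun l _ => ?_
            simp only [hQ, Finset.mul_sum]
    have e1 : ∑ i, ∑ j, α i * α j * C i j
        = (1 / (N : ℝ)) * ∑ k, Q k k - (1 / (N : ℝ) ^ 2) * ∑ k, ∑ l, Q k l := by
      simp only [hC, mul_sub, Finset.sum_sub_distrib]
      rw [hA, hB]
    have c1 : ∑ _k : Fin N, ∑ _l : Fin N, Q _k _k = (N : ℝ) * ∑ k, Q k k := by
      simp [Finset.sum_const, Finset.mul_sum]
    have c2 : ∑ _k : Fin N, ∑ l : Fin N, Q l l = (N : ℝ) * ∑ k, Q k k := by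
      rw [Finset.sum_comm]
      exact c1
    have c3 : ∑ k : Fin N, ∑ l : Fin N, Q l k = ∑ k, ∑ l, Q k l := Finset.sum_comm
    have e2 : ∑ k, ∑ l, (Q k k + Q l l - Q k l - Q l k)
        = 2 * (N : ℝ) * ∑ k, Q k k - 2 * ∑ k, ∑ l, Q k l := by
      simp only [Finset.sum_sub_distrib, Finset.sum_add_distrib]
      rw [c1, c2, c3]
      ring
    have hfinal : ∑ i, ∑ j, α i * α j * C i j
        = (1 / (2 * (N : ℝ) ^ 2)) * ∑ k, ∑ l, (Q k k + Q l l - Q k l - Q l k) := by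
      rw [e1, e2]
      field_simp
    rw [hfinal]
    apply mul_nonneg (by positivity)
    exact Finset.sum_nonneg fun k _ => Finset.sum_nonneg fun l _ => key k l
end

section
/- As the kernel width σ → ∞, the correntropy with Gaussian kernel satisfies V_σ(x,y) = 1/(√(2π)σ) − (1/(2√(2π)σ³)) E[(x−y)²] + O(σ⁻⁵); in particular, √(2π)σ³ (1/(√(2π)σ) − V_σ(x,y)) → ½ E[(x−y)²], so correntropy recovers the second-order statistic E[(x−y)²] in the large-bandwidth limit. -/
/-!
Since `exp (-t) = 1 - t + O(t²)` uniformly for `t ≥ 0`, taking `t = (x - y)² / (2σ²)` and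
integrating gives `∫ exp (-(x - y)² / (2σ²)) = 1 - E[(x - y)²] / (2σ²) + O(E[(x - y)⁴] / σ⁴)`.
Multiplying by `1 / (√(2π) σ)` yields the expansion with an `O(σ⁻⁵)` remainder, and multiplying
that remainder by `√(2π) σ³` leaves `O(σ⁻²)`, which tends to zero.
-/

open MeasureTheory Filter Asymptotics

theorem Real.abs_exp_neg_sub_one_sub_le {t : ℝ} (ht : 0 ≤ t) :
    |Real.exp (-t) - (1 - t)| ≤ t ^ 2 / 2 := by
  have h_lower : 1 - t ≤ Real.exp (-t) := Real.one_sub_le_exp_neg t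
  have h_upper : Real.exp (-t) ≤ 1 - t + t ^ 2 / 2 := by
    have hq : 1 + t + t ^ 2 / 2 ≤ Real.exp t := Real.quadratic_le_exp_of_nonneg ht
    have hnn : (0 : ℝ) ≤ 1 - t + t ^ 2 / 2 := by nlinarith [sq_nonneg (t - 1)]
    rw [Real.exp_neg, inv_le_iff_one_le_mul₀ (Real.exp_pos t)]
    nlinarith [mul_le_mul_of_nonneg_left hq hnn, sq_nonneg (t ^ 2)]
  rw [abs_le]
  constructor <;> linarith

section GaussianMoment

variable {Ω : Type*} [MeasurableSpace Ω] {μ : Measure Ω} [IsProbabilityMeasure μ] {d : Ω → ℝ}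

theorem abs_integral_exp_neg_sq_div_sub_le (h2 : Integrable (fun ω => d ω ^ 2) μ)
    (h4 : Integrable (fun ω => d ω ^ 4) μ) {a : ℝ} (ha : 0 ≤ a) :
    |∫ ω, Real.exp (-d ω ^ 2 / a) ∂μ - (1 - (∫ ω, d ω ^ 2 ∂μ) / a)|
      ≤ (∫ ω, d ω ^ 4 ∂μ) / (2 * a ^ 2) := by
  have h_exp : Integrable (fun ω => Real.exp (-d ω ^ 2 / a)) μ := by
    refine .of_bound
      (Real.continuous_exp.comp_aestronglyMeasurable (h2.neg.div_const a).1) 1 ?_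
    filter_upwards with ω
    rw [Real.norm_eq_abs, abs_of_pos (Real.exp_pos _), Real.exp_le_one_iff, neg_div]
    exact neg_nonpos.2 (by positivity)
  have h_lin : Integrable (fun ω => 1 - d ω ^ 2 / a) μ :=
    (integrable_const 1).sub (h2.div_const a)
  have h_eq : ∫ ω, Real.exp (-d ω ^ 2 / a) ∂μ - (1 - (∫ ω, d ω ^ 2 ∂μ) / a)
      = ∫ ω, (Real.exp (-(d ω ^ 2 / a)) - (1 - d ω ^ 2 / a)) ∂μ := by
    rw [integral_sub (by simpa only [neg_div] using h_exp) h_lin,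
      integral_sub (integrable_const 1) (h2.div_const a), integral_div]
    simp [neg_div]
  rw [h_eq, ← Real.norm_eq_abs, ← integral_div]
  refine norm_integral_le_of_norm_le (h4.div_const _) (ae_of_all _ fun ω => ?_)
  calc ‖Real.exp (-(d ω ^ 2 / a)) - (1 - d ω ^ 2 / a)‖
      ≤ (d ω ^ 2 / a) ^ 2 / 2 := Real.abs_exp_neg_sub_one_sub_le (by positivity)
    _ = d ω ^ 4 / (2 * a ^ 2) := by ring

theorem gaussian_correntropy_sub_expansion_isBigO (h2 : Integrable (fun ω => d ω ^ 2) μ)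
    (h4 : Integrable (fun ω => d ω ^ 4) μ) :
    (fun σ : ℝ => (∫ ω, (1 / (Real.sqrt (2 * Real.pi) * σ)) *
        Real.exp (-d ω ^ 2 / (2 * σ ^ 2)) ∂μ) - (1 / (Real.sqrt (2 * Real.pi) * σ)
        - (1 / (2 * Real.sqrt (2 * Real.pi) * σ ^ 3)) * ∫ ω, d ω ^ 2 ∂μ))
      =O[atTop] (fun σ : ℝ => σ⁻¹ ^ 5) := by
  set s := Real.sqrt (2 * Real.pi)
  have hs : 0 < s := Real.sqrt_pos.2 (by positivity)
  refine .of_bound ((∫ ω, d ω ^ 4 ∂μ) / (8 * s)) ?_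
  filter_upwards [eventually_gt_atTop 0] with σ hσ
  have h_factor : (∫ ω, 1 / (s * σ) * Real.exp (-d ω ^ 2 / (2 * σ ^ 2)) ∂μ)
        - (1 / (s * σ) - 1 / (2 * s * σ ^ 3) * ∫ ω, d ω ^ 2 ∂μ)
      = 1 / (s * σ) * (∫ ω, Real.exp (-d ω ^ 2 / (2 * σ ^ 2)) ∂μ
        - (1 - (∫ ω, d ω ^ 2 ∂μ) / (2 * σ ^ 2))) := by
    rw [integral_const_mul]
    field_simp
  rw [h_factor, Real.norm_eq_abs, Real.norm_eq_abs, abs_mul,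
    abs_of_pos (by positivity : (0 : ℝ) < 1 / (s * σ)), abs_of_pos (by positivity : (0 : ℝ) < σ⁻¹ ^ 5)]
  calc 1 / (s * σ) * |∫ ω, Real.exp (-d ω ^ 2 / (2 * σ ^ 2)) ∂μ
          - (1 - (∫ ω, d ω ^ 2 ∂μ) / (2 * σ ^ 2))|
      ≤ 1 / (s * σ) * ((∫ ω, d ω ^ 4 ∂μ) / (2 * (2 * σ ^ 2) ^ 2)) :=
        mul_le_mul_of_nonneg_left (abs_integral_exp_neg_sq_div_sub_le h2 h4 (by positivity))
          (by positivity)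
    _ = (∫ ω, d ω ^ 4 ∂μ) / (8 * s) * σ⁻¹ ^ 5 := by
        field_simp
        ring

end GaussianMoment

theorem correntropy_large_bandwidth_limit_general {Ω : Type*} [MeasurableSpace Ω]
    (P : Measure Ω) [IsProbabilityMeasure P]
    (x y : Ω → ℝ)
    (h4 : Integrable (fun ω => (x ω - y ω) ^ 4) P)
    (h2 : Integrable (fun ω => (x ω - y ω) ^ 2) P)
    (V : ℝ → ℝ)
    (hV : ∀ σ : ℝ, V σ = ∫ ω, (1 / (Real.sqrt (2 * Real.pi) * σ)) *
      Real.exp (-(x ω - y ω) ^ 2 / (2 * σ ^ 2)) ∂P) :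
    (fun σ : ℝ => V σ - (1 / (Real.sqrt (2 * Real.pi) * σ)
        - (1 / (2 * Real.sqrt (2 * Real.pi) * σ ^ 3)) * ∫ ω, (x ω - y ω) ^ 2 ∂P))
      =O[atTop] (fun σ : ℝ => σ⁻¹ ^ 5) ∧
    Tendsto (fun σ : ℝ => Real.sqrt (2 * Real.pi) * σ ^ 3 *
        (1 / (Real.sqrt (2 * Real.pi) * σ) - V σ)) atTop
      (nhds ((1 / 2) * ∫ ω, (x ω - y ω) ^ 2 ∂P)) := by
  obtain rfl : V = _ := funext hV
  set s := Real.sqrt (2 * Real.pi)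
  set R := fun σ : ℝ => (∫ ω, (1 / (s * σ)) * Real.exp (-(x ω - y ω) ^ 2 / (2 * σ ^ 2)) ∂P)
    - (1 / (s * σ) - (1 / (2 * s * σ ^ 3)) * ∫ ω, (x ω - y ω) ^ 2 ∂P)
  have hR : R =O[atTop] (fun σ : ℝ => σ⁻¹ ^ 5) :=
    gaussian_correntropy_sub_expansion_isBigO h2 h4
  refine ⟨hR, ?_⟩
  have h_scaled : Tendsto (fun σ : ℝ => s * σ ^ 3 * R σ) atTop (nhds 0) := by
    refine (((isBigO_refl _ _).const_mul_left s).mul hR).trans_tendsto ?_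
    refine (by simpa using (tendsto_inv_atTop_zero (𝕜 := ℝ)).pow 2 :
      Tendsto (fun σ : ℝ => σ⁻¹ ^ 2) atTop (nhds 0)).congr' ?_
    filter_upwards [eventually_ne_atTop 0] with σ hσ
    field_simp
  have hs : s ≠ 0 := (Real.sqrt_pos.2 (by positivity)).ne'
  refine ((tendsto_const_nhds.sub h_scaled).congr' ?_).trans (by rw [sub_zero])
  filter_upwards [eventually_ne_atTop 0] with σ hσ
  simp only [R]
  field_simp
  ring

/-- As `σ → ∞`, the Gaussian-kernel correntropy satisfies
`V_σ(x,y) = 1/(√(2π)σ) − (1/(2√(2π)σ³)) E[(x−y)²] + O(σ⁻⁵)`; in particular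
`√(2π)σ³ (1/(√(2π)σ) − V_σ(x,y)) → ½ E[(x−y)²]`, so correntropy recovers the second-order
statistic `E[(x−y)²]` in the large-bandwidth limit. -/
theorem correntropy_large_bandwidth_limit {Ω : Type*} [MeasurableSpace Ω]
    (P : Measure Ω) [IsProbabilityMeasure P]
    (x y : Ω → ℝ) (hx : Measurable x) (hy : Measurable y)
    (h4 : Integrable (fun ω => (x ω - y ω) ^ 4) P)
    (h2 : Integrable (fun ω => (x ω - y ω) ^ 2) P)
    (V : ℝ → ℝ)
    (hV : ∀ σ : ℝ, V σ = ∫ ω, (1 / (Real.sqrt (2 * Real.pi) * σ)) *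
      Real.exp (-(x ω - y ω) ^ 2 / (2 * σ ^ 2)) ∂P) :
    (fun σ : ℝ => V σ - (1 / (Real.sqrt (2 * Real.pi) * σ)
        - (1 / (2 * Real.sqrt (2 * Real.pi) * σ ^ 3)) * ∫ ω, (x ω - y ω) ^ 2 ∂P))
      =O[atTop] (fun σ : ℝ => σ⁻¹ ^ 5) ∧
    Tendsto (fun σ : ℝ => Real.sqrt (2 * Real.pi) * σ ^ 3 *
        (1 / (Real.sqrt (2 * Real.pi) * σ) - V σ)) atTop
      (nhds ((1 / 2) * ∫ ω, (x ω - y ω) ^ 2 ∂P)) :=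
  correntropy_large_bandwidth_limit_general P x y h4 h2 V hV
end
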